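/- arXiv:2202.03343 — 5 statements merged into one kernel-verified Lean document; each statement's English description precedes it below -/
import Mathlib

section
/- Define V(ξ) = Σ_{i=1}^{n−1} kᵢ φᵢ(ξ)². Let ξ : [0,∞) → ℝⁿ be differentiable with ξ′(t) = χ(ξ(t)) for all t ≥ 0. Then for all t ≥ 0, (d/dt) V(ξ(t)) = −2 ‖Σ_{j=1}^{n−1} kⱼ φⱼ(ξ(t)) ∇φⱼ(ξ(t))‖² ≤ 0; in particular t ↦ V(ξ(t)) is nonincreasing on [0,∞). -/
/-!
The vector `⊥_φ(ξ)` is orthogonal to every `∇φᵢ(ξ)`, since the determinant defining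
`⟪⊥_φ(ξ), ∇φᵢ(ξ)⟫` has two equal columns. Hence along a trajectory of `χ` only the
convergence term `-∑ kⱼ φⱼ ∇φⱼ` contributes to `d/dt ∑ kᵢ φᵢ²`, and by the chain rule this
derivative is `2 ⟪∑ kᵢ φᵢ ∇φᵢ, -∑ kⱼ φⱼ ∇φⱼ⟫ = -2 ‖∑ kⱼ φⱼ ∇φⱼ‖²`.
-/

open scoped RealInnerProductSpace

theorem inner_eq_zero_of_forall_inner_eq_det {n : ℕ}
    (v : Fin (n - 1) → EuclideanSpace ℝ (Fin n)) (w : EuclideanSpace ℝ (Fin n))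
    (hw : ∀ u : EuclideanSpace ℝ (Fin n), ⟪w, u⟫ = Matrix.det (Matrix.of (fun (i j : Fin n) =>
      if h : (j : ℕ) < n - 1 then v ⟨j, h⟩ i else u i)))
    (i : Fin (n - 1)) : ⟪w, v i⟫ = 0 := by
  have hlast : n - 1 < n := by have := i.2; omega
  rw [hw]
  refine Matrix.det_zero_of_column_eq (i := ⟨i, by omega⟩) (j := ⟨n - 1, hlast⟩)
    (by simp [Fin.ext_iff, i.2.ne]) fun r => ?_
  simp only [Matrix.of_apply, dif_pos i.2, lt_irrefl, dif_neg, not_false_eq_true]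

theorem sum_mul_inner_sub_sum_smul {ι E : Type*} [NormedAddCommGroup E] [InnerProductSpace ℝ E]
    (s : Finset ι) (c : ι → ℝ) (g : ι → E) {w : E} (hw : ∀ i ∈ s, ⟪w, g i⟫ = 0) :
    ∑ i ∈ s, c i * ⟪g i, w - ∑ j ∈ s, c j • g j⟫ = -‖∑ i ∈ s, c i • g i‖ ^ 2 := by
  rw [← real_inner_self_eq_norm_sq, sum_inner, ← Finset.sum_neg_distrib]
  refine Finset.sum_congr rfl fun i hi => ?_
  rw [inner_sub_right, real_inner_comm, hw i hi, real_inner_smul_left]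
  ring

theorem hasDerivAt_sum_mul_sq_comp {ι E : Type*} [Fintype ι] [NormedAddCommGroup E]
    [InnerProductSpace ℝ E] [CompleteSpace E] (k : ι → ℝ) {φ : ι → E → ℝ} {ξ : ℝ → E}
    {ξ' : E} {t : ℝ} (hφ : ∀ i, DifferentiableAt ℝ (φ i) (ξ t)) (hξ : HasDerivAt ξ ξ' t) :
    HasDerivAt (fun s => ∑ i, k i * φ i (ξ s) ^ 2)
      (2 * ∑ i, k i * φ i (ξ t) * ⟪gradient (φ i) (ξ t), ξ'⟫) t := by
  have hcomp (i : ι) : HasDerivAt (fun s => φ i (ξ s)) ⟪gradient (φ i) (ξ t), ξ'⟫ t :=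
    (hφ i).hasGradientAt.hasFDerivAt.comp_hasDerivAt t hξ
  refine (HasDerivAt.fun_sum fun i _ => ((hcomp i).pow 2).const_mul (k i)).congr_deriv ?_
  rw [Finset.mul_sum]
  refine Finset.sum_congr rfl fun i _ => ?_
  ring

theorem stmt3_general (n : ℕ)
    (k : Fin (n - 1) → ℝ)
    (φ : Fin (n - 1) → EuclideanSpace ℝ (Fin n) → ℝ)
    (hφ : ∀ i, ContDiff ℝ 1 (φ i))
    (bot : EuclideanSpace ℝ (Fin n) → EuclideanSpace ℝ (Fin n))
    (hbot : ∀ ξ u : EuclideanSpace ℝ (Fin n),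
      ⟪bot ξ, u⟫ = Matrix.det (Matrix.of (fun (i j : Fin n) =>
        if h : (j : ℕ) < n - 1 then gradient (φ ⟨j, h⟩) ξ i else u i)))
    (χ : EuclideanSpace ℝ (Fin n) → EuclideanSpace ℝ (Fin n))
    (hχ : ∀ ξ, χ ξ = bot ξ - ∑ i, (k i * φ i ξ) • gradient (φ i) ξ)
    (V : EuclideanSpace ℝ (Fin n) → ℝ)
    (hV : ∀ ξ, V ξ = ∑ i, k i * φ i ξ ^ 2)
    (ξ : ℝ → EuclideanSpace ℝ (Fin n))
    (hξ : ∀ t : ℝ, 0 ≤ t → HasDerivAt ξ (χ (ξ t)) t) :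
    (∀ t : ℝ, 0 ≤ t →
      HasDerivAt (fun s => V (ξ s))
        (-2 * ‖∑ j, (k j * φ j (ξ t)) • gradient (φ j) (ξ t)‖ ^ 2) t ∧
      -2 * ‖∑ j, (k j * φ j (ξ t)) • gradient (φ j) (ξ t)‖ ^ 2 ≤ 0) ∧
    AntitoneOn (fun t => V (ξ t)) (Set.Ici 0) := by
  have hderiv (t : ℝ) (ht : 0 ≤ t) : HasDerivAt (fun s => V (ξ s))
      (-2 * ‖∑ j, (k j * φ j (ξ t)) • gradient (φ j) (ξ t)‖ ^ 2) t := by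
    simp only [hV]
    convert hasDerivAt_sum_mul_sq_comp k (fun i => (hφ i).differentiable one_ne_zero _)
      (hξ t ht) using 1
    rw [hχ, sum_mul_inner_sub_sum_smul _ _ _ fun i _ =>
      inner_eq_zero_of_forall_inner_eq_det (fun j => gradient (φ j) (ξ t)) _ (hbot (ξ t)) i]
    ring
  have hnonpos (t : ℝ) : -2 * ‖∑ j, (k j * φ j (ξ t)) • gradient (φ j) (ξ t)‖ ^ 2 ≤ 0 :=
    mul_nonpos_of_nonpos_of_nonneg (by norm_num) (sq_nonneg _)
  refine ⟨fun t ht => ⟨hderiv t ht, hnonpos t⟩, ?_⟩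
  refine antitoneOn_of_hasDerivWithinAt_nonpos (convex_Ici 0)
    (fun t ht => (hderiv t ht).continuousAt.continuousWithinAt) (fun t ht => ?_)
    (fun t _ => hnonpos t)
  rw [interior_Ici] at ht
  exact (hderiv t (le_of_lt ht)).hasDerivWithinAt

theorem stmt3 (n : ℕ) (hn : 2 ≤ n)
    (k : Fin (n - 1) → ℝ) (hk : ∀ i, 0 < k i)
    (φ : Fin (n - 1) → EuclideanSpace ℝ (Fin n) → ℝ)
    (hφ : ∀ i, ContDiff ℝ 1 (φ i))
    (bot : EuclideanSpace ℝ (Fin n) → EuclideanSpace ℝ (Fin n))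
    (hbot : ∀ ξ u : EuclideanSpace ℝ (Fin n),
      ⟪bot ξ, u⟫ = Matrix.det (Matrix.of (fun (i j : Fin n) =>
        if h : (j : ℕ) < n - 1 then gradient (φ ⟨j, h⟩) ξ i else u i)))
    (χ : EuclideanSpace ℝ (Fin n) → EuclideanSpace ℝ (Fin n))
    (hχ : ∀ ξ, χ ξ = bot ξ - ∑ i, (k i * φ i ξ) • gradient (φ i) ξ)
    (V : EuclideanSpace ℝ (Fin n) → ℝ)
    (hV : ∀ ξ, V ξ = ∑ i, k i * φ i ξ ^ 2)
    (ξ : ℝ → EuclideanSpace ℝ (Fin n))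
    (hξ : ∀ t : ℝ, 0 ≤ t → HasDerivAt ξ (χ (ξ t)) t) :
    (∀ t : ℝ, 0 ≤ t →
      HasDerivAt (fun s => V (ξ s))
        (-2 * ‖∑ j, (k j * φ j (ξ t)) • gradient (φ j) (ξ t)‖ ^ 2) t ∧
      -2 * ‖∑ j, (k j * φ j (ξ t)) • gradient (φ j) (ξ t)‖ ^ 2 ≤ 0) ∧
    AntitoneOn (fun t => V (ξ t)) (Set.Ici 0) :=
  stmt3_general n k φ hφ bot hbot χ hχ V hV ξ hξ
end

section
/- The set {ξ ∈ ℝⁿ : Σ_{j=1}^{n−1} kⱼ φⱼ(ξ) ∇φⱼ(ξ) = 0} equals P ∪ C, where P = {ξ ∈ ℝⁿ : φᵢ(ξ) = 0 for all i = 1, …, n−1} and C = {ξ ∈ ℝⁿ : χ(ξ) = 0}. -/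
/-!
The wedge product `⊥_φ(ξ)` is orthogonal to every `∇φᵢ(ξ)` (a determinant with a repeated
column), and it vanishes as soon as the gradients are linearly dependent. So if
`S = ∑ kᵢ φᵢ ∇φᵢ` vanishes at a point off `P`, the gradients are dependent there (the
coefficients `kᵢ φᵢ` are not all zero) and `χ = ⊥_φ - S = 0`. Conversely, at a point of `C`
we have `S = ⊥_φ`, which is orthogonal to `S`, so `S = 0`.
-/

open scoped RealInnerProductSpace

theorem Fin.sum_dite_lt_eq {M : Type*} [AddCommMonoid M] {m n : ℕ} (h : m ≤ n) (f : Fin m → M) :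
    ∑ j : Fin n, (if hj : (j : ℕ) < m then f ⟨j, hj⟩ else 0) = ∑ i, f i := by
  refine (Fintype.sum_of_injective (Fin.castLE h) (Fin.castLE_injective h) _ _ ?_ ?_).symm
  · intro j hj
    rw [dif_neg]
    exact fun hjm => hj ⟨⟨j, hjm⟩, rfl⟩
  · intro i
    simp

section augmentedMatrix

variable {m n : ℕ}

/-- For `m = n - 1`, `u ↦ det (augmentedMatrix v u)` is `u ↦ ⟪v₀ ∧ ⋯ ∧ vₘ₋₁, u⟫`. -/
def augmentedMatrix (v : Fin m → EuclideanSpace ℝ (Fin n)) (u : EuclideanSpace ℝ (Fin n)) :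
    Matrix (Fin n) (Fin n) ℝ :=
  Matrix.of fun i j => if h : (j : ℕ) < m then v ⟨j, h⟩ i else u i

theorem det_augmentedMatrix_self (hmn : m < n) (v : Fin m → EuclideanSpace ℝ (Fin n))
    (i : Fin m) : (augmentedMatrix v (v i)).det = 0 := by
  refine Matrix.det_zero_of_column_eq (i := Fin.castLE hmn.le i) (j := ⟨m, hmn⟩) ?_ fun r => ?_
  · simp [Fin.ext_iff, i.isLt.ne]
  · simp [augmentedMatrix]

theorem det_augmentedMatrix_eq_zero_of_sum_smul_eq_zero (hmn : m ≤ n)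
    {v : Fin m → EuclideanSpace ℝ (Fin n)} {c : Fin m → ℝ} (hc : ∑ i, c i • v i = 0)
    (hc0 : c ≠ 0) (u : EuclideanSpace ℝ (Fin n)) : (augmentedMatrix v u).det = 0 := by
  rw [← Matrix.exists_mulVec_eq_zero_iff]
  refine ⟨fun j => if hj : (j : ℕ) < m then c ⟨j, hj⟩ else 0, fun hw => hc0 ?_, ?_⟩
  · funext i
    simpa using congrFun hw (Fin.castLE hmn i)
  · funext r
    have hcr : ∑ i, c i * v i r = 0 := by
      simpa using congrArg (fun x : EuclideanSpace ℝ (Fin n) => x r) hc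
    refine (Finset.sum_congr rfl fun j _ => ?_).trans ((Fin.sum_dite_lt_eq hmn _).trans hcr)
    by_cases hj : (j : ℕ) < m <;> simp [augmentedMatrix, hj, mul_comm]

theorem sum_smul_eq_zero_iff_of_inner_eq_det (hmn : m < n) {v : Fin m → EuclideanSpace ℝ (Fin n)}
    {b : EuclideanSpace ℝ (Fin n)} (hb : ∀ u, ⟪b, u⟫ = (augmentedMatrix v u).det)
    (c : Fin m → ℝ) : ∑ i, c i • v i = 0 ↔ c = 0 ∨ b - ∑ i, c i • v i = 0 := by
  constructor
  · intro hs
    by_cases hc0 : c = 0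
    · exact Or.inl hc0
    · refine Or.inr ?_
      rw [hs, sub_zero, ← inner_self_eq_zero (𝕜 := ℝ), hb,
        det_augmentedMatrix_eq_zero_of_sum_smul_eq_zero hmn.le hs hc0]
  · rintro (hc0 | hbs)
    · simp [hc0]
    · rw [sub_eq_zero] at hbs
      have horth : ⟪b, ∑ i, c i • v i⟫ = 0 := by
        rw [inner_sum]
        refine Finset.sum_eq_zero fun i _ => ?_
        rw [real_inner_smul_right, hb, det_augmentedMatrix_self hmn, mul_zero]
      rwa [← hbs, inner_self_eq_zero, hbs] at horth

end augmentedMatrix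

theorem stmt4_general (n : ℕ) (hn : 2 ≤ n)
    (k : Fin (n - 1) → ℝ) (hk : ∀ i, 0 < k i)
    (φ : Fin (n - 1) → EuclideanSpace ℝ (Fin n) → ℝ)
    (bot : EuclideanSpace ℝ (Fin n) → EuclideanSpace ℝ (Fin n))
    (hbot : ∀ ξ u : EuclideanSpace ℝ (Fin n),
      ⟪bot ξ, u⟫ = Matrix.det (Matrix.of (fun (i j : Fin n) =>
        if h : (j : ℕ) < n - 1 then gradient (φ ⟨j, h⟩) ξ i else u i)))
    (χ : EuclideanSpace ℝ (Fin n) → EuclideanSpace ℝ (Fin n))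
    (hχ : ∀ ξ, χ ξ = bot ξ - ∑ i, (k i * φ i ξ) • gradient (φ i) ξ)
    (P C : Set (EuclideanSpace ℝ (Fin n)))
    (hP : P = {ξ | ∀ i, φ i ξ = 0})
    (hC : C = {ξ | χ ξ = 0}) :
    {ξ : EuclideanSpace ℝ (Fin n) | ∑ i, (k i * φ i ξ) • gradient (φ i) ξ = 0} = P ∪ C := by
  ext ξ
  have hcoeff : (fun i => k i * φ i ξ) = 0 ↔ ∀ i, φ i ξ = 0 := by
    simp [funext_iff, (hk _).ne']
  simpa [hP, hC, hχ, hcoeff] using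
    sum_smul_eq_zero_iff_of_inner_eq_det (by omega) (hbot ξ) fun i => k i * φ i ξ

theorem stmt4 (n : ℕ) (hn : 2 ≤ n)
    (k : Fin (n - 1) → ℝ) (hk : ∀ i, 0 < k i)
    (φ : Fin (n - 1) → EuclideanSpace ℝ (Fin n) → ℝ)
    (hφ : ∀ i, ContDiff ℝ 1 (φ i))
    (bot : EuclideanSpace ℝ (Fin n) → EuclideanSpace ℝ (Fin n))
    (hbot : ∀ ξ u : EuclideanSpace ℝ (Fin n),
      ⟪bot ξ, u⟫ = Matrix.det (Matrix.of (fun (i j : Fin n) =>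
        if h : (j : ℕ) < n - 1 then gradient (φ ⟨j, h⟩) ξ i else u i)))
    (χ : EuclideanSpace ℝ (Fin n) → EuclideanSpace ℝ (Fin n))
    (hχ : ∀ ξ, χ ξ = bot ξ - ∑ i, (k i * φ i ξ) • gradient (φ i) ξ)
    (P C : Set (EuclideanSpace ℝ (Fin n)))
    (hP : P = {ξ | ∀ i, φ i ξ = 0})
    (hC : C = {ξ | χ ξ = 0}) :
    {ξ : EuclideanSpace ℝ (Fin n) | ∑ i, (k i * φ i ξ) • gradient (φ i) ξ = 0} = P ∪ C :=
  stmt4_general n hn k hk φ bot hbot χ hχ P C hP hC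
end

section
/- Let M be a connected Hausdorff topological space and φ a continuous flow on M. Let P and C be disjoint nonempty compact subsets of M, each positively invariant (φ(t, x) ∈ P for all x ∈ P and t ≥ 0, and likewise for C). Suppose that for every x ∈ M, the trajectory from x converges topologically to P or converges topologically to C. Then P and C cannot both be attractive. -/
/-- The trajectory of the flow `φ` from `x` converges topologically to the set `A`. -/
def FlowConvergesTo {M : Type*} [TopologicalSpace M] (φ : ℝ × M → M) (x : M) (A : Set M) :
    Prop :=
  ∀ V : Set M, IsOpen V → A ⊆ V → ∃ T : ℝ, ∀ t ≥ T, φ (t, x) ∈ V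

/-- A nonempty set `A` is attractive for the flow `φ` if some open set `U ⊇ A` consists of
points whose trajectories converge topologically to `A`. -/
def FlowAttractive {M : Type*} [TopologicalSpace M] (φ : ℝ × M → M) (A : Set M) : Prop :=
  ∃ U : Set M, IsOpen U ∧ A ⊆ U ∧ ∀ x ∈ U, FlowConvergesTo φ x A

private lemma shift_conv {M : Type*} [TopologicalSpace M] (φ : ℝ × M → M)
    (hadd : ∀ t s x, φ (t + s, x) = φ (t, φ (s, x))) {x : M} {A : Set M} (T : ℝ)
    (h : FlowConvergesTo φ (φ (T, x)) A) : FlowConvergesTo φ x A := by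
  intro V hV hAV
  obtain ⟨T', hT'⟩ := h V hV hAV
  refine ⟨T' + T, fun t ht => ?_⟩
  have : φ (t, x) = φ (t - T, φ (T, x)) := by
    rw [← hadd]; ring_nf
  rw [this]
  exact hT' _ (by linarith)

theorem stmt8 {M : Type*} [TopologicalSpace M] [T2Space M] [ConnectedSpace M]
    (φ : ℝ × M → M)
    (hcont : Continuous φ)
    (h0 : ∀ x, φ (0, x) = x)
    (hadd : ∀ t s x, φ (t + s, x) = φ (t, φ (s, x)))
    (P C : Set M) (hPne : P.Nonempty) (hCne : C.Nonempty)
    (hPcomp : IsCompact P) (hCcomp : IsCompact C)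
    (hdisj : Disjoint P C)
    (hPinv : ∀ x ∈ P, ∀ t : ℝ, 0 ≤ t → φ (t, x) ∈ P)
    (hCinv : ∀ x ∈ C, ∀ t : ℝ, 0 ≤ t → φ (t, x) ∈ C)
    (hdich : ∀ x : M, FlowConvergesTo φ x P ∨ FlowConvergesTo φ x C) :
    ¬ (FlowAttractive φ P ∧ FlowAttractive φ C) := by
  rintro ⟨⟨UP, hUPo, hPUP, hUP⟩, ⟨UC, hUCo, hCUC, hUC⟩⟩
  -- separate P and C by disjoint open sets
  obtain ⟨VP, VC, hVPo, hVCo, hPVP, hCVC, hVdisj⟩ :=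
    SeparatedNhds.of_isCompact_isCompact hPcomp hCcomp hdisj
  -- basins
  set BP : Set M := {x | FlowConvergesTo φ x P} with hBP
  set BC : Set M := {x | FlowConvergesTo φ x C} with hBC
  -- no point converges to both
  have hnot : ∀ x, ¬ (FlowConvergesTo φ x P ∧ FlowConvergesTo φ x C) := by
    rintro x ⟨hp, hc⟩
    obtain ⟨T1, hT1⟩ := hp VP hVPo hPVP
    obtain ⟨T2, hT2⟩ := hc VC hVCo hCVC
    exact hVdisj.ne_of_mem (hT1 (max T1 T2) (le_max_left _ _))
      (hT2 (max T1 T2) (le_max_right _ _)) rfl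
  -- BP is open
  have hopen : ∀ (A U : Set M), IsOpen U → A ⊆ U →
      (∀ x ∈ U, FlowConvergesTo φ x A) → IsOpen {x | FlowConvergesTo φ x A} := by
    intro A U hUo hAU hU
    rw [isOpen_iff_mem_nhds]
    intro x hx
    obtain ⟨T, hT⟩ := hx U hUo hAU
    have hmem : φ (T, x) ∈ U := hT T le_rfl
    have hcontT : Continuous (fun y => φ (T, y)) :=
      hcont.comp (continuous_const.prodMk continuous_id)
    have : {y | φ (T, y) ∈ U} ∈ nhds x :=
      (hUo.preimage hcontT).mem_nhds hmem
    exact Filter.mem_of_superset this (fun y hy => shift_conv φ hadd T (hU _ hy))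
  have hBPo : IsOpen BP := hopen P UP hUPo hPUP hUP
  have hBCo : IsOpen BC := hopen C UC hUCo hCUC hUC
  -- BP is clopen since its complement is BC
  have hcompl : BPᶜ = BC := by
    ext x
    simp only [Set.mem_compl_iff, hBP, hBC, Set.mem_setOf_eq]
    constructor
    · intro h; exact (hdich x).resolve_left h
    · intro h hp; exact hnot x ⟨hp, h⟩
  have hclopen : IsClopen BP := ⟨by rw [← isOpen_compl_iff, hcompl]; exact hBCo, hBPo⟩
  -- P ⊆ BP, C ⊆ BC
  obtain ⟨p, hp⟩ := hPne
  obtain ⟨c, hc⟩ := hCne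
  have hpBP : p ∈ BP := by
    intro V hV hPV
    exact ⟨0, fun t ht => hPV (hPinv p hp t ht)⟩
  have hcBC : c ∈ BC := by
    intro V hV hCV
    exact ⟨0, fun t ht => hCV (hCinv c hc t ht)⟩
  rcases isClopen_iff.mp hclopen with h | h
  · rw [h] at hpBP; exact hpBP
  · have : c ∈ BP := h ▸ Set.mem_univ c
    rw [← hcompl] at hcBC
    exact hcBC this
end

section
/- Assume each φᵢ is twice continuously differentiable, that P is nonempty and compact, that either C = ∅ or inf{‖c − p‖ : c ∈ C, p ∈ P} > 0, and that for every κ > 0, inf{‖e(ξ)‖ : ξ ∈ ℝⁿ, dist(ξ, P) ≥ κ} > 0. Then the desired path P is asymptotically stable for the guiding vector field, in the following sense: (i) (stability) for every ε > 0 there exists δ > 0 such that every differentiable ξ : [0,∞) → ℝⁿ with ξ′(t) = χ(ξ(t)) for all t ≥ 0 and dist(ξ(0), P) < δ satisfies dist(ξ(t), P) < ε for all t ≥ 0; (ii) (attractivity) there exists an open set U ⊇ P such that every such solution with ξ(0) ∈ U satisfies dist(ξ(t), P) → 0 as t → ∞. -/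
/-!
`V = ∑ kᵢ φᵢ²` is a Lyapunov function for `P`. Since `⊥_φ` is orthogonal to every `∇φᵢ`,
along a solution `V` decreases at rate `2 ‖s‖²`, where `s = ∑ kᵢ φᵢ ∇φᵢ`, so that
`χ = ⊥_φ - s`. Off `P`, `s = 0` is a linear relation among the gradients, which forces
`⊥_φ = 0` and hence a singular point. The error bound makes the sublevel sets of `V` shrink
to `P`, which gives stability; and on the compact shell `{η ≤ V} ∩ cthickening ε₀ P`,
which avoids `C`, the decay rate is bounded below, which gives attractivity.
-/

open scoped RealInnerProductSpace Topology
open Set Filter Metric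

lemma exists_pos_forall_le_of_pos {ι : Type*} [Finite ι] {k : ι → ℝ} (hk : ∀ i, 0 < k i) :
    ∃ c > 0, ∀ i, c ≤ k i :=
  (eventually_mem_nhdsWithin (s := Ioi 0) (a := 0) |>.and
    (eventually_all.2 fun i => nhdsWithin_le_nhds (Iic_mem_nhds (hk i)))).exists

lemma antitoneOn_add_mul_of_hasDerivAt_le {f f' : ℝ → ℝ} {c : ℝ}
    (hf : ∀ t, 0 ≤ t → HasDerivAt f (f' t) t) (hc : ∀ t, 0 ≤ t → f' t ≤ -c) :
    AntitoneOn (fun t => f t + c * t) (Ici 0) := by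
  have hg : ∀ t, 0 ≤ t → HasDerivAt (fun t => f t + c * t) (f' t + c) t := fun t ht =>
    (hf t ht).add (by simpa using (hasDerivAt_id t).const_mul c)
  refine antitoneOn_of_hasDerivWithinAt_nonpos (f' := fun t => f' t + c) (convex_Ici 0)
    (fun t ht => (hg t ht).continuousAt.continuousWithinAt) (fun t ht => ?_) (fun t ht => ?_)
  all_goals rw [interior_Ici] at ht
  · exact (hg t (le_of_lt ht)).hasDerivWithinAt
  · linarith [hc t (le_of_lt ht)]

lemma exists_lt_zero_of_hasDerivAt_le_neg {f f' : ℝ → ℝ} {c : ℝ} (hc : 0 < c)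
    (hf : ∀ t, 0 ≤ t → HasDerivAt f (f' t) t) (hf' : ∀ t, 0 ≤ t → f' t ≤ -c) :
    ∃ t, 0 ≤ t ∧ f t < 0 := by
  set T := (|f 0| + 1) / c
  have hT : 0 ≤ T := by positivity
  have hcT : c * T = |f 0| + 1 := mul_div_cancel₀ _ hc.ne'
  have hdecay := antitoneOn_add_mul_of_hasDerivAt_le hf hf' self_mem_Ici hT hT
  simp only [mul_zero, add_zero, hcT] at hdecay
  exact ⟨T, hT, by linarith [le_abs_self (f 0)]⟩

lemma antitoneOn_comp_of_hasDerivAt {X : Type*} {V W : X → ℝ} (hW : ∀ x, 0 ≤ W x) {ξ : ℝ → X}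
    (hξ : ∀ t, 0 ≤ t → HasDerivAt (fun t => V (ξ t)) (-W (ξ t)) t) :
    AntitoneOn (fun t => V (ξ t)) (Ici 0) := by
  simpa using antitoneOn_add_mul_of_hasDerivAt_le hξ (c := 0) (by simpa using fun t _ => hW _)

section Lyapunov

variable {X : Type*} [MetricSpace X] {P : Set X} {V W : X → ℝ}

lemma exists_forall_infDist_lt_imp_lt (hP : IsCompact P) (hPne : P.Nonempty)
    (hV : Continuous V) (hVP : ∀ x ∈ P, V x = 0) {η : ℝ} (hη : 0 < η) :
    ∃ δ > 0, ∀ x, infDist x P < δ → V x < η := by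
  obtain ⟨δ, hδ, hsub⟩ := hP.exists_thickening_subset_open (isOpen_Iio.preimage hV)
    (fun p hp => by simpa [hVP p hp] using hη)
  exact ⟨δ, hδ, fun x hx => hsub ((mem_thickening_iff_infDist_lt hPne).2 hx)⟩

lemma exists_forall_infDist_lt_of_antitoneOn (hP : IsCompact P) (hPne : P.Nonempty)
    (hV : Continuous V) (hVP : ∀ x ∈ P, V x = 0)
    (hVsmall : ∀ κ > 0, ∃ η > 0, ∀ x, V x < η → infDist x P < κ) {ε : ℝ} (hε : 0 < ε) :
    ∃ δ > 0, ∀ ξ : ℝ → X, AntitoneOn (fun t => V (ξ t)) (Ici 0) →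
      infDist (ξ 0) P < δ → ∀ t, 0 ≤ t → infDist (ξ t) P < ε := by
  obtain ⟨η, hη, hVε⟩ := hVsmall ε hε
  obtain ⟨δ, hδ, hδη⟩ := exists_forall_infDist_lt_imp_lt hP hPne hV hVP hη
  exact ⟨δ, hδ, fun ξ hξ h0 t ht => hVε _ ((hξ self_mem_Ici ht ht).trans_lt (hδη _ h0))⟩

/-- Near `P`, `W` is bounded below on `{η ≤ V}` by compactness, so `V` decays linearly
there and has to drop below `η`. -/
lemma exists_lt_of_hasDerivAt [ProperSpace X] (hP : IsCompact P) (hPne : P.Nonempty)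
    (hV : Continuous V) (hW : Continuous W) (hV0 : ∀ x, 0 ≤ V x) {ε₀ : ℝ}
    (hWpos : ∀ x, infDist x P ≤ ε₀ → 0 < V x → 0 < W x) {ξ : ℝ → X}
    (hξ : ∀ t, 0 ≤ t → HasDerivAt (fun t => V (ξ t)) (-W (ξ t)) t)
    (hstay : ∀ t, 0 ≤ t → infDist (ξ t) P ≤ ε₀) {η : ℝ} (hη : 0 < η) :
    ∃ T, 0 ≤ T ∧ V (ξ T) < η := by
  by_contra! hlarge
  set A := {x | infDist x P ≤ ε₀ ∧ η ≤ V x}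
  have hA : IsCompact A := by
    refine (hP.cthickening (r := ε₀ + 1)).of_isClosed_subset
      ((isClosed_le (continuous_infDist_pt P) continuous_const).inter
        (isClosed_le continuous_const hV)) fun x hx => thickening_subset_cthickening _ _ ?_
    exact (mem_thickening_iff_infDist_lt hPne).2 (by linarith [hx.1])
  have hξA : ∀ t, 0 ≤ t → ξ t ∈ A := fun t ht => ⟨hstay t ht, hlarge t ht⟩
  obtain ⟨x₀, hx₀, hmin⟩ := hA.exists_isMinOn ⟨ξ 0, hξA 0 le_rfl⟩ hW.continuousOn
  obtain ⟨t, ht, hneg⟩ := exists_lt_zero_of_hasDerivAt_le_neg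
    (hWpos x₀ hx₀.1 (hη.trans_le hx₀.2)) hξ fun t ht => neg_le_neg (hmin (hξA t ht))
  exact (hV0 _).not_gt hneg

lemma tendsto_infDist_of_hasDerivAt [ProperSpace X] (hP : IsCompact P) (hPne : P.Nonempty)
    (hV : Continuous V) (hW : Continuous W) (hV0 : ∀ x, 0 ≤ V x) (hW0 : ∀ x, 0 ≤ W x)
    (hVsmall : ∀ κ > 0, ∃ η > 0, ∀ x, V x < η → infDist x P < κ) {ε₀ : ℝ}
    (hWpos : ∀ x, infDist x P ≤ ε₀ → 0 < V x → 0 < W x) {ξ : ℝ → X}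
    (hξ : ∀ t, 0 ≤ t → HasDerivAt (fun t => V (ξ t)) (-W (ξ t)) t)
    (hstay : ∀ t, 0 ≤ t → infDist (ξ t) P ≤ ε₀) :
    Tendsto (fun t => infDist (ξ t) P) atTop (𝓝 0) := by
  refine tendsto_order.2 ⟨fun a ha => .of_forall fun t => ha.trans_le infDist_nonneg,
    fun κ hκ => ?_⟩
  obtain ⟨η, hη, hVκ⟩ := hVsmall κ hκ
  obtain ⟨T, hT, hVT⟩ := exists_lt_of_hasDerivAt hP hPne hV hW hV0 hWpos hξ hstay hη
  exact eventually_atTop.2 ⟨T, fun t ht => hVκ _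
    ((antitoneOn_comp_of_hasDerivAt hW0 hξ hT (hT.trans ht) ht).trans_lt hVT)⟩

theorem asymptoticStability_of_lyapunov [ProperSpace X] (hP : IsCompact P)
    (hPne : P.Nonempty) (hV : Continuous V) (hW : Continuous W) (hV0 : ∀ x, 0 ≤ V x)
    (hW0 : ∀ x, 0 ≤ W x) (hVP : ∀ x ∈ P, V x = 0)
    (hVsmall : ∀ κ > 0, ∃ η > 0, ∀ x, V x < η → infDist x P < κ) {ε₀ : ℝ} (hε₀ : 0 < ε₀)
    (hWpos : ∀ x, infDist x P ≤ ε₀ → 0 < V x → 0 < W x) (S : Set (ℝ → X))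
    (hS : ∀ ξ ∈ S, ∀ t, 0 ≤ t → HasDerivAt (fun t => V (ξ t)) (-W (ξ t)) t) :
    (∀ ε > 0, ∃ δ > 0, ∀ ξ ∈ S, infDist (ξ 0) P < δ → ∀ t, 0 ≤ t → infDist (ξ t) P < ε) ∧
    ∃ U, IsOpen U ∧ P ⊆ U ∧ ∀ ξ ∈ S, ξ 0 ∈ U →
      Tendsto (fun t => infDist (ξ t) P) atTop (𝓝 0) := by
  have hstable : ∀ ε > 0, ∃ δ > 0, ∀ ξ ∈ S, infDist (ξ 0) P < δ →
      ∀ t, 0 ≤ t → infDist (ξ t) P < ε := fun ε hε =>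
    (exists_forall_infDist_lt_of_antitoneOn hP hPne hV hVP hVsmall hε).imp
      fun _ ⟨hδ, h⟩ => ⟨hδ, fun ξ hξ => h ξ (antitoneOn_comp_of_hasDerivAt hW0 (hS ξ hξ))⟩
  obtain ⟨δ₀, hδ₀, hδ₀ε₀⟩ := hstable ε₀ hε₀
  refine ⟨hstable, thickening δ₀ P, isOpen_thickening, self_subset_thickening hδ₀ P,
    fun ξ hξ h0 => tendsto_infDist_of_hasDerivAt hP hPne hV hW hV0 hW0 hVsmall hWpos (hS ξ hξ)
      fun t ht => (hδ₀ε₀ ξ hξ ((mem_thickening_iff_infDist_lt hPne).1 h0) t ht).le⟩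

end Lyapunov

section GuidingField

variable {ι E : Type*} [Fintype ι] (k : ι → ℝ) (φ : ι → E → ℝ)

def weightedErrorSq (x : E) : ℝ := ∑ i, k i * φ i x ^ 2

/-- Half the gradient of `weightedErrorSq k φ`. -/
noncomputable def convergingTerm [NormedAddCommGroup E] [InnerProductSpace ℝ E]
    [CompleteSpace E] (x : E) : E :=
  ∑ i, (k i * φ i x) • gradient (φ i) x

variable {k φ}

lemma weightedErrorSq_nonneg (hk : ∀ i, 0 ≤ k i) (x : E) : 0 ≤ weightedErrorSq k φ x :=
  Finset.sum_nonneg fun i _ => mul_nonneg (hk i) (sq_nonneg _)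

lemma weightedErrorSq_eq_zero {x : E} (hx : ∀ i, φ i x = 0) : weightedErrorSq k φ x = 0 := by
  simp [weightedErrorSq, hx]

lemma mul_sum_sq_le_weightedErrorSq {c : ℝ} (hc : ∀ i, c ≤ k i) (x : E) :
    c * ∑ i, φ i x ^ 2 ≤ weightedErrorSq k φ x := by
  rw [Finset.mul_sum]
  exact Finset.sum_le_sum fun i _ => mul_le_mul_of_nonneg_right (hc i) (sq_nonneg _)

lemma exists_forall_weightedErrorSq_lt_imp_lt (hk : ∀ i, 0 < k i) {d : E → ℝ}
    (herr : ∀ κ > 0, ∃ m > 0, ∀ x, κ ≤ d x → m ^ 2 ≤ ∑ i, φ i x ^ 2) {κ : ℝ} (hκ : 0 < κ) :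
    ∃ η > 0, ∀ x, weightedErrorSq k φ x < η → d x < κ := by
  obtain ⟨c, hc, hck⟩ := exists_pos_forall_le_of_pos hk
  obtain ⟨m, hm, hme⟩ := herr κ hκ
  refine ⟨c * m ^ 2, by positivity, fun x hx => lt_of_not_ge fun hκx => ?_⟩
  have hm2 : c * m ^ 2 ≤ c * ∑ i, φ i x ^ 2 := by gcongr; exact hme x hκx
  linarith [mul_sum_sq_le_weightedErrorSq (φ := φ) hck x]

lemma continuous_weightedErrorSq [TopologicalSpace E] (hφ : ∀ i, Continuous (φ i)) :
    Continuous (weightedErrorSq k φ) := by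
  unfold weightedErrorSq
  fun_prop

variable [NormedAddCommGroup E] [InnerProductSpace ℝ E] [CompleteSpace E]

lemma continuous_convergingTerm (hφ : ∀ i, ContDiff ℝ 1 (φ i)) :
    Continuous (convergingTerm k φ) := by
  have hgrad : ∀ i, Continuous (gradient (φ i)) := fun i =>
    (InnerProductSpace.toDual ℝ E).symm.continuous.comp ((hφ i).continuous_fderiv one_ne_zero)
  have hφc : ∀ i, Continuous (φ i) := fun i => (hφ i).continuous
  unfold convergingTerm
  fun_prop

lemma inner_convergingTerm_left (x v : E) :
    ⟪convergingTerm k φ x, v⟫ = ∑ i, k i * φ i x * ⟪gradient (φ i) x, v⟫ := by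
  simp only [convergingTerm, sum_inner, real_inner_smul_left]

lemma HasDerivAt.weightedErrorSq {γ : ℝ → E} {v : E} {t : ℝ} (hγ : HasDerivAt γ v t)
    (hφ : ∀ i, DifferentiableAt ℝ (φ i) (γ t)) :
    HasDerivAt (fun t => weightedErrorSq k φ (γ t)) (2 * ⟪convergingTerm k φ (γ t), v⟫) t := by
  have hφγ : ∀ i, HasDerivAt (fun t => φ i (γ t)) ⟪gradient (φ i) (γ t), v⟫ t := fun i => by
    have h := (hφ i).hasFDerivAt.comp_hasDerivAt t hγ
    rwa [← inner_gradient_left] at h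
  refine (HasDerivAt.fun_sum fun i _ => ((hφγ i).pow 2).const_mul (k i)).congr_deriv ?_
  rw [inner_convergingTerm_left, Finset.mul_sum]
  exact Finset.sum_congr rfl fun i _ => by push_cast; ring

end GuidingField

section Wedge

variable {n : ℕ}

/-- `b = v₀ ∧ ⋯ ∧ v_{n-2}`, the generalised cross product in `ℝⁿ`. -/
def IsWedgeProduct (v : Fin (n - 1) → EuclideanSpace ℝ (Fin n))
    (b : EuclideanSpace ℝ (Fin n)) : Prop :=
  ∀ u : EuclideanSpace ℝ (Fin n), ⟪b, u⟫ = Matrix.det (Matrix.of (fun (i j : Fin n) =>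
    if h : (j : ℕ) < n - 1 then v ⟨j, h⟩ i else u i))

variable {v : Fin (n - 1) → EuclideanSpace ℝ (Fin n)} {b : EuclideanSpace ℝ (Fin n)}

lemma IsWedgeProduct.inner_eq_zero (hb : IsWedgeProduct v b) (i : Fin (n - 1)) :
    ⟪b, v i⟫ = 0 := by
  obtain ⟨m, rfl⟩ : ∃ m, n = m + 1 := ⟨n - 1, by have := i.isLt; omega⟩
  rw [hb]
  refine Matrix.det_zero_of_column_eq (Fin.castSucc_lt_last i).ne fun r => ?_
  simp [Fin.is_lt]

/-- A nontrivial relation among the `v i` makes `[v₀, …, v_{n-2}, b]` singular, so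
`‖b‖² = 0`. -/
lemma IsWedgeProduct.eq_zero_of_sum_smul_eq_zero (hb : IsWedgeProduct v b)
    {c : Fin (n - 1) → ℝ} (hc : ∑ i, c i • v i = 0) (hc0 : c ≠ 0) : b = 0 := by
  obtain ⟨i₀, -⟩ := Function.ne_iff.1 hc0
  obtain ⟨m, rfl⟩ : ∃ m, n = m + 1 := ⟨n - 1, by have := i₀.isLt; omega⟩
  rw [← inner_self_eq_zero (𝕜 := ℝ), hb, ← Matrix.exists_mulVec_eq_zero_iff]
  refine ⟨Fin.lastCases 0 c, fun h => hc0 (funext fun i => by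
    simpa using congrFun h (Fin.castSucc i)), funext fun r => ?_⟩
  have hr := congrArg (fun w : EuclideanSpace ℝ (Fin (m + 1)) => w r) hc
  simp only [WithLp.ofLp_sum, WithLp.ofLp_smul] at hr
  simpa [Matrix.mulVec, dotProduct, Fin.sum_univ_castSucc, mul_comm] using hr

end Wedge

section WedgeGuidingField

variable {n : ℕ} {k : Fin (n - 1) → ℝ} {φ : Fin (n - 1) → EuclideanSpace ℝ (Fin n) → ℝ}
  {x b : EuclideanSpace ℝ (Fin n)}

lemma IsWedgeProduct.inner_convergingTerm (hb : IsWedgeProduct (fun i => gradient (φ i) x) b) :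
    ⟪convergingTerm k φ x, b⟫ = 0 := by
  rw [inner_convergingTerm_left]
  refine Finset.sum_eq_zero fun i _ => ?_
  rw [real_inner_comm, hb.inner_eq_zero i, mul_zero]

lemma IsWedgeProduct.convergingTerm_ne_zero
    (hb : IsWedgeProduct (fun i => gradient (φ i) x) b) (hk : ∀ i, k i ≠ 0)
    (hχ : b - convergingTerm k φ x ≠ 0) (hV : weightedErrorSq k φ x ≠ 0) :
    convergingTerm k φ x ≠ 0 := by
  intro hs
  obtain ⟨i, hi⟩ : ∃ i, φ i x ≠ 0 := by
    by_contra! h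
    exact hV (weightedErrorSq_eq_zero h)
  refine hχ ?_
  rw [hs, hb.eq_zero_of_sum_smul_eq_zero hs (Function.ne_iff.2 ⟨i, mul_ne_zero (hk i) hi⟩),
    sub_zero]

lemma IsWedgeProduct.hasDerivAt_weightedErrorSq_comp {γ : ℝ → EuclideanSpace ℝ (Fin n)}
    {t : ℝ} (hb : IsWedgeProduct (fun i => gradient (φ i) (γ t)) b)
    (hγ : HasDerivAt γ (b - convergingTerm k φ (γ t)) t)
    (hφ : ∀ i, DifferentiableAt ℝ (φ i) (γ t)) :
    HasDerivAt (fun t => weightedErrorSq k φ (γ t))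
      (-(2 * ‖convergingTerm k φ (γ t)‖ ^ 2)) t :=
  (hγ.weightedErrorSq hφ).congr_deriv (by
    rw [inner_sub_right, hb.inner_convergingTerm, real_inner_self_eq_norm_sq]
    ring)

end WedgeGuidingField

theorem stmt9_general (n : ℕ)
    (k : Fin (n - 1) → ℝ) (hk : ∀ i, 0 < k i)
    (φ : Fin (n - 1) → EuclideanSpace ℝ (Fin n) → ℝ)
    (hφ : ∀ i, ContDiff ℝ 2 (φ i))
    (bot : EuclideanSpace ℝ (Fin n) → EuclideanSpace ℝ (Fin n))
    (hbot : ∀ ξ u : EuclideanSpace ℝ (Fin n),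
      ⟪bot ξ, u⟫ = Matrix.det (Matrix.of (fun (i j : Fin n) =>
        if h : (j : ℕ) < n - 1 then gradient (φ ⟨j, h⟩) ξ i else u i)))
    (χ : EuclideanSpace ℝ (Fin n) → EuclideanSpace ℝ (Fin n))
    (hχ : ∀ ξ, χ ξ = bot ξ - ∑ i, (k i * φ i ξ) • gradient (φ i) ξ)
    (P C : Set (EuclideanSpace ℝ (Fin n)))
    (hP : P = {ξ | ∀ i, φ i ξ = 0})
    (hC : C = {ξ | χ ξ = 0})
    (e : EuclideanSpace ℝ (Fin n) → EuclideanSpace ℝ (Fin (n - 1)))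
    (he : ∀ ξ i, e ξ i = φ i ξ)
    (hPne : P.Nonempty) (hPcomp : IsCompact P)
    (hCP : C = ∅ ∨ ∃ d > (0 : ℝ), ∀ c ∈ C, ∀ p ∈ P, d ≤ ‖c - p‖)
    (herr : ∀ κ > (0 : ℝ), ∃ m > (0 : ℝ), ∀ ξ : EuclideanSpace ℝ (Fin n),
      κ ≤ Metric.infDist ξ P → m ≤ ‖e ξ‖) :
    (∀ ε > (0 : ℝ), ∃ δ > (0 : ℝ), ∀ ξ : ℝ → EuclideanSpace ℝ (Fin n),
        (∀ t : ℝ, 0 ≤ t → HasDerivAt ξ (χ (ξ t)) t) →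
        Metric.infDist (ξ 0) P < δ →
        ∀ t : ℝ, 0 ≤ t → Metric.infDist (ξ t) P < ε) ∧
    (∃ U : Set (EuclideanSpace ℝ (Fin n)), IsOpen U ∧ P ⊆ U ∧
        ∀ ξ : ℝ → EuclideanSpace ℝ (Fin n),
          (∀ t : ℝ, 0 ≤ t → HasDerivAt ξ (χ (ξ t)) t) →
          ξ 0 ∈ U →
          Filter.Tendsto (fun t => Metric.infDist (ξ t) P) Filter.atTop (nhds 0)) := by
  have hφ1 : ∀ i, ContDiff ℝ 1 (φ i) := fun i => (hφ i).of_le one_le_two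
  have hχs : ∀ ξ, χ ξ = bot ξ - convergingTerm k φ ξ := hχ
  have hwedge : ∀ ξ, IsWedgeProduct (fun i => gradient (φ i) ξ) (bot ξ) := hbot
  have hVsmall : ∀ κ > 0, ∃ η > 0, ∀ x, weightedErrorSq k φ x < η → infDist x P < κ :=
    fun _ => exists_forall_weightedErrorSq_lt_imp_lt hk fun κ hκ =>
      (herr κ hκ).imp fun m ⟨hm, h⟩ => ⟨hm, fun x hx => by
        simpa [EuclideanSpace.norm_sq_eq, he] using pow_le_pow_left₀ hm.le (h x hx) 2⟩
  obtain ⟨ε₀, hε₀, hCfar⟩ : ∃ ε₀ > 0, ∀ x ∈ C, ε₀ < infDist x P := by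
    rcases hCP with rfl | ⟨d, hd, hdC⟩
    · exact ⟨1, one_pos, fun x hx => hx.elim⟩
    · exact ⟨d / 2, half_pos hd, fun x hx => (half_lt_self hd).trans_le
        ((le_infDist hPne).2 fun p hp => by simpa [dist_eq_norm] using hdC x hx p hp)⟩
  have hWpos : ∀ x, infDist x P ≤ ε₀ → 0 < weightedErrorSq k φ x →
      0 < 2 * ‖convergingTerm k φ x‖ ^ 2 := fun x hx hVx => by
    have hs := (hwedge x).convergingTerm_ne_zero (fun i => (hk i).ne')
      (fun h0 => (hCfar x (by rw [hC]; exact (hχs x).trans h0)).not_ge hx) hVx.ne'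
    have := norm_pos_iff.2 hs
    positivity
  exact asymptoticStability_of_lyapunov hPcomp hPne
    (continuous_weightedErrorSq fun i => (hφ i).continuous)
    (by have := continuous_convergingTerm hφ1 (k := k); fun_prop)
    (weightedErrorSq_nonneg fun i => (hk i).le) (fun x => by positivity)
    (fun p hp => weightedErrorSq_eq_zero (by rw [hP] at hp; exact hp)) hVsmall hε₀ hWpos
    {ξ | ∀ t, 0 ≤ t → HasDerivAt ξ (χ (ξ t)) t} fun ξ hξ t ht =>
      (hwedge _).hasDerivAt_weightedErrorSq_comp (hχs _ ▸ hξ t ht)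
        fun i => (hφ1 i).differentiable one_ne_zero _

theorem stmt9 (n : ℕ) (hn : 2 ≤ n)
    (k : Fin (n - 1) → ℝ) (hk : ∀ i, 0 < k i)
    (φ : Fin (n - 1) → EuclideanSpace ℝ (Fin n) → ℝ)
    (hφ : ∀ i, ContDiff ℝ 2 (φ i))
    (bot : EuclideanSpace ℝ (Fin n) → EuclideanSpace ℝ (Fin n))
    (hbot : ∀ ξ u : EuclideanSpace ℝ (Fin n),
      ⟪bot ξ, u⟫ = Matrix.det (Matrix.of (fun (i j : Fin n) =>
        if h : (j : ℕ) < n - 1 then gradient (φ ⟨j, h⟩) ξ i else u i)))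
    (χ : EuclideanSpace ℝ (Fin n) → EuclideanSpace ℝ (Fin n))
    (hχ : ∀ ξ, χ ξ = bot ξ - ∑ i, (k i * φ i ξ) • gradient (φ i) ξ)
    (P C : Set (EuclideanSpace ℝ (Fin n)))
    (hP : P = {ξ | ∀ i, φ i ξ = 0})
    (hC : C = {ξ | χ ξ = 0})
    (e : EuclideanSpace ℝ (Fin n) → EuclideanSpace ℝ (Fin (n - 1)))
    (he : ∀ ξ i, e ξ i = φ i ξ)
    (hPne : P.Nonempty) (hPcomp : IsCompact P)
    (hCP : C = ∅ ∨ ∃ d > (0 : ℝ), ∀ c ∈ C, ∀ p ∈ P, d ≤ ‖c - p‖)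
    (herr : ∀ κ > (0 : ℝ), ∃ m > (0 : ℝ), ∀ ξ : EuclideanSpace ℝ (Fin n),
      κ ≤ Metric.infDist ξ P → m ≤ ‖e ξ‖) :
    (∀ ε > (0 : ℝ), ∃ δ > (0 : ℝ), ∀ ξ : ℝ → EuclideanSpace ℝ (Fin n),
        (∀ t : ℝ, 0 ≤ t → HasDerivAt ξ (χ (ξ t)) t) →
        Metric.infDist (ξ 0) P < δ →
        ∀ t : ℝ, 0 ≤ t → Metric.infDist (ξ t) P < ε) ∧
    (∃ U : Set (EuclideanSpace ℝ (Fin n)), IsOpen U ∧ P ⊆ U ∧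
        ∀ ξ : ℝ → EuclideanSpace ℝ (Fin n),
          (∀ t : ℝ, 0 ≤ t → HasDerivAt ξ (χ (ξ t)) t) →
          ξ 0 ∈ U →
          Filter.Tendsto (fun t => Metric.infDist (ξ t) P) Filter.atTop (nhds 0)) :=
  stmt9_general n k hk φ hφ bot hbot χ hχ P C hP hC e he hPne hPcomp hCP herr
end

section
/- Let φ be a continuous flow on a topological space M, let P ⊆ M, and let K ⊆ M be compact. Suppose (stability) for every open set U₁ ⊇ P there exists an open set U₂ ⊇ P such that φ(t, x) ∈ U₁ for all x ∈ U₂ and all t ≥ 0; and (attraction) the trajectory from every x ∈ K converges topologically to P. Then for every open set O ⊇ P there exists T > 0 such that φ(t, x) ∈ O for all x ∈ K and all t ≥ T. -/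
theorem stmt15 {M : Type*} [TopologicalSpace M] (φ : ℝ × M → M)
    (hcont : Continuous φ)
    (h0 : ∀ x, φ (0, x) = x)
    (hadd : ∀ t s x, φ (t + s, x) = φ (t, φ (s, x)))
    (P K : Set M) (hK : IsCompact K)
    (hstab : ∀ U₁ : Set M, IsOpen U₁ → P ⊆ U₁ →
      ∃ U₂ : Set M, IsOpen U₂ ∧ P ⊆ U₂ ∧ ∀ x ∈ U₂, ∀ t : ℝ, 0 ≤ t → φ (t, x) ∈ U₁)
    (hattr : ∀ x ∈ K, ∀ V : Set M, IsOpen V → P ⊆ V → ∃ T : ℝ, ∀ t ≥ T, φ (t, x) ∈ V) :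
    ∀ O : Set M, IsOpen O → P ⊆ O →
      ∃ T > (0 : ℝ), ∀ x ∈ K, ∀ t ≥ T, φ (t, x) ∈ O := by
  intro O hO hPO
  obtain ⟨U₂, hU₂open, hPU₂, hU₂⟩ := hstab O hO hPO
  -- for each x in K, get time τ ≥ 1 and open neighborhood W with φ(τ, ·) mapping W into U₂
  have key : ∀ x ∈ K, ∃ τ : ℝ, 1 ≤ τ ∧ ∃ W : Set M, IsOpen W ∧ x ∈ W ∧
      ∀ y ∈ W, φ (τ, y) ∈ U₂ := by
    intro x hx
    obtain ⟨T, hT⟩ := hattr x hx U₂ hU₂open hPU₂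
    refine ⟨max T 1, le_max_right _ _, ?_⟩
    have hmem : φ (max T 1, x) ∈ U₂ := hT _ (le_max_left _ _)
    have hc : Continuous fun y => φ (max T 1, y) :=
      hcont.comp (continuous_const.prodMk continuous_id)
    refine ⟨(fun y => φ (max T 1, y)) ⁻¹' U₂, hU₂open.preimage hc, hmem, fun y hy => hy⟩
  choose! τ hτ1 W hWopen hxW hWmap using key
  obtain ⟨s, hs⟩ := hK.elim_nhds_subcover' (fun x hx => W x) (fun x hx =>
    (hWopen x hx).mem_nhds (hxW x hx))
  rcases s.eq_empty_or_nonempty with hse | hse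
  · refine ⟨1, one_pos, fun x hx => absurd (hs hx) ?_⟩
    simp [hse]
  · refine ⟨s.sup' hse fun x => τ x, ?_, ?_⟩
    · obtain ⟨a, ha⟩ := hse
      exact lt_of_lt_of_le one_pos (le_trans (hτ1 a a.2) (Finset.le_sup' (fun x : K => τ x) ha))
    · intro x hx t ht
      have := hs hx
      simp only [Set.mem_iUnion] at this
      obtain ⟨a, ha, hxa⟩ := this
      have hτa : τ a ≤ t := le_trans (Finset.le_sup' (fun x : K => τ x) ha) ht
      have : φ (t, x) = φ (t - τ a, φ (τ a, x)) := by
        rw [← hadd]; ring_nf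
      rw [this]
      exact hU₂ _ (hWmap a a.2 x hxa) _ (by linarith)
end
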